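/- arXiv:2304.07507 — 9 statements merged into one kernel-verified Lean document; each statement's English description precedes it below -/
import Mathlib

section
/- Let G be a labeled graph on [n] with 12-representant w, and let b be a bad vertex of G (there exist a < b < c with ab and bc non-edges and ac an edge). Then the letter b occurs at least twice in w. -/
/-! Since `ab` and `bc` are non-edges, some `a` precedes some `b` and some `b` precedes some `c`.
If both were the same occurrence of `b`, that `a` would precede that `c`, contradicting `ac ∈ E(G)`;
so `b` occurs at two distinct positions. -/

/-- Some occurrence of `i` comes strictly before some occurrence of `j` in `w`. -/
def Occ {n : ℕ} (w : List (Fin n)) (i j : Fin n) : Prop :=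
  ∃ p q : Fin w.length, p < q ∧ w.get p = i ∧ w.get q = j

/-- The word `w` over `[n]` 12-represents the labeled graph `G` on `Fin n`:
every letter occurs at least once, and for `i < j`, `i` and `j` are adjacent
iff no occurrence of `i` comes before any occurrence of `j`. -/
def Represents {n : ℕ} (G : SimpleGraph (Fin n)) (w : List (Fin n)) : Prop :=
  (∀ v : Fin n, v ∈ w) ∧ ∀ i j : Fin n, i < j → (G.Adj i j ↔ ¬ Occ w i j)

/-- `b` is a bad vertex of `G`. -/
def Bad {n : ℕ} (G : SimpleGraph (Fin n)) (b : Fin n) : Prop :=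
  ∃ a c : Fin n, a < b ∧ b < c ∧ ¬ G.Adj a b ∧ ¬ G.Adj b c ∧ G.Adj a c

section

variable {n : ℕ} {G : SimpleGraph (Fin n)} {w : List (Fin n)} {a b c : Fin n}

theorem two_le_count_of_occ_of_occ_of_not_occ (hab : Occ w a b) (hbc : Occ w b c)
    (hac : ¬ Occ w a c) : 2 ≤ w.count b := by
  obtain ⟨p₁, q₁, hpq₁, hp₁, hq₁⟩ := hab
  obtain ⟨p₂, q₂, hpq₂, hp₂, hq₂⟩ := hbc
  have hne : q₁ ≠ p₂ := by
    rintro rfl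
    exact hac ⟨p₁, q₂, hpq₁.trans hpq₂, hp₁, hq₂⟩
  rw [← List.duplicate_iff_two_le_count, List.duplicate_iff_exists_distinct_get]
  rcases hne.lt_or_gt with h | h
  · exact ⟨q₁, p₂, h, hq₁.symm, hp₂.symm⟩
  · exact ⟨p₂, q₁, h, hp₂.symm, hq₁.symm⟩

theorem Represents.occ_of_not_adj (hw : Represents G w) (hab : a < b) (h : ¬ G.Adj a b) :
    Occ w a b :=
  not_not.mp (mt (hw.2 a b hab).mpr h)

theorem Represents.not_occ_of_adj (hw : Represents G w) (hab : a < b) (h : G.Adj a b) :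
    ¬ Occ w a b :=
  (hw.2 a b hab).mp h

end

theorem stmt3 (n : ℕ) (G : SimpleGraph (Fin n)) (w : List (Fin n))
    (hw : Represents G w) (b : Fin n) (hb : Bad G b) :
    2 ≤ w.count b := by
  obtain ⟨a, c, hab, hbc, hnab, hnbc, hac⟩ := hb
  exact two_le_count_of_occ_of_occ_of_not_occ (hw.occ_of_not_adj hab hnab)
    (hw.occ_of_not_adj hbc hnbc) (hw.not_occ_of_adj (hab.trans hbc) hac)
end

section
/- Let G be a labeled graph on [n] that is 12-representable. Then every 12-representant of G has length at least n + b, where b is the number of bad vertices of G. -/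
lemma two_le_count_of_ne {α : Type*} [DecidableEq α] (w : List α) (b : α)
    (p q : Fin w.length) (hpq : p < q) (hp : w.get p = b) (hq : w.get q = b) :
    2 ≤ w.count b := by
  have h1 : b ∈ w.take q.1 := by
    have h := (List.getElem_take' (xs := w) p.2 hpq).symm
    rw [List.get_eq_getElem] at hp
    exact hp ▸ h ▸ List.getElem_mem _
  have h2 : b ∈ w.drop q.1 := by
    have h : (w.drop q.1)[0]'(by simp [q.2]) = w[q.1]'q.2 := by simp
    rw [List.get_eq_getElem] at hq
    exact hq ▸ h ▸ List.getElem_mem _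
  have h3 := List.count_append (a := b) (l₁ := w.take q.1) (l₂ := w.drop q.1)
  rw [List.take_append_drop] at h3
  have c1 : 1 ≤ (w.take q.1).count b := List.count_pos_iff.mpr h1
  have c2 : 1 ≤ (w.drop q.1).count b := List.count_pos_iff.mpr h2
  omega

lemma sum_count_eq_length {α : Type*} [Fintype α] [DecidableEq α] (w : List α) :
    ∑ v : α, w.count v = w.length := by
  induction w with
  | nil => simp
  | cons a l ih => simp [List.count_cons, Finset.sum_add_distrib, ih, add_comm]

theorem stmt4 (n : ℕ) (G : SimpleGraph (Fin n)) [DecidablePred (Bad G)]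
    (w : List (Fin n)) (hw : Represents G w) :
    n + (Finset.univ.filter (Bad G)).card ≤ w.length := by
  obtain ⟨hmem, hadj⟩ := hw
  have key : ∀ b : Fin n, Bad G b → 2 ≤ w.count b := by
    rintro b ⟨a, c, hab, hbc, nab, nbc, ac⟩
    have o1 : Occ w a b := not_not.mp ((not_iff_not.mpr (hadj a b hab)).mp nab)
    have o2 : Occ w b c := not_not.mp ((not_iff_not.mpr (hadj b c hbc)).mp nbc)
    have o3 : ¬ Occ w a c := (hadj a c (hab.trans hbc)).mp ac
    obtain ⟨p, q, hpq, hpa, hqb⟩ := o1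
    obtain ⟨p', q', hpq', hpb, hqc⟩ := o2
    by_cases h : q = p'
    · exact absurd ⟨p, q', (h ▸ hpq).trans hpq', hpa, hqc⟩ o3
    · rcases lt_or_gt_of_ne h with hlt | hgt
      · exact two_le_count_of_ne w b q p' hlt hqb hpb
      · exact two_le_count_of_ne w b p' q hgt hpb hqb
  have hcount : ∀ v : Fin n, 1 + (if Bad G v then 1 else 0) ≤ w.count v := by
    intro v
    by_cases hv : Bad G v
    · simpa [hv] using key v hv
    · simpa [hv] using List.count_pos_iff.mpr (hmem v)
  calc n + (Finset.univ.filter (Bad G)).card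
      = ∑ v : Fin n, (1 + if Bad G v then 1 else 0) := by
        rw [Finset.sum_add_distrib, Finset.sum_const, ← Finset.card_filter]
        simp [mul_comm]
    _ ≤ ∑ v : Fin n, w.count v := Finset.sum_le_sum fun v _ => hcount v
    _ = w.length := sum_count_eq_length w
end

section
/- Let w = W1·[i]·[j]·W2·[i]·W3 be a 12-representant of a labeled graph G, where the letter i occurs exactly at the two displayed positions and j < i. Then w' = W1·[j]·[i]·W2·[i]·W3 is also a 12-representant of G. -/
/-! Swapping two adjacent letters `x y` of a word only affects whether `x` occurs before `y`
and whether `y` occurs before `x`. For `y < x` the first pair is never consulted, and the second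
stays true when another `x` follows. -/

section

variable {n : ℕ}

theorem occ_iff_sublist {w : List (Fin n)} {a b : Fin n} :
    Occ w a b ↔ List.Sublist [a, b] w := by
  rw [List.sublist_iff_exists_fin_orderEmbedding_get_eq]
  constructor
  · rintro ⟨p, q, hpq, rfl, rfl⟩
    refine ⟨OrderEmbedding.ofStrictMono ![p, q] (Fin.strictMono_iff_lt_succ.2 ?_), ?_⟩
    · intro k; fin_cases k; simpa using hpq
    · intro k; fin_cases k <;> rfl
  · rintro ⟨f, hf⟩
    exact ⟨f 0, f 1, f.lt_iff_lt.2 Fin.zero_lt_one, (hf 0).symm, (hf 1).symm⟩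

theorem occ_cons {x : Fin n} {w : List (Fin n)} {a b : Fin n} :
    Occ (x :: w) a b ↔ Occ w a b ∨ a = x ∧ b ∈ w := by
  simp [occ_iff_sublist, List.sublist_cons_iff]

theorem occ_append_cons_cons_comm {u v : List (Fin n)} {x y a b : Fin n}
    (hxy : ¬(a = x ∧ b = y)) (hyx : ¬(a = y ∧ b = x)) :
    Occ (u ++ x :: y :: v) a b ↔ Occ (u ++ y :: x :: v) a b := by
  induction u with
  | nil => simp only [List.nil_append, occ_cons, List.mem_cons]; tauto
  | cons z u ih =>
    simp only [List.cons_append, occ_cons, ih, ((List.Perm.swap y x v).append_left u).mem_iff]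

theorem Represents.swap_adjacent {G : SimpleGraph (Fin n)} {u v : List (Fin n)} {x y : Fin n}
    (hw : Represents G (u ++ x :: y :: v)) (hyx : y < x) (hxv : x ∈ v) :
    Represents G (u ++ y :: x :: v) := by
  have hperm : (u ++ y :: x :: v).Perm (u ++ x :: y :: v) := (List.Perm.swap x y v).append_left u
  refine ⟨fun c => hperm.mem_iff.2 (hw.1 c), fun a b hab => (hw.2 a b hab).trans (not_congr ?_)⟩
  by_cases hba : a = y ∧ b = x
  · rw [hba.1, hba.2, occ_iff_sublist, occ_iff_sublist]
    have hxv' : List.Sublist [x] v := List.singleton_sublist.2 hxv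
    have hxx : List.Sublist [x] (x :: v) := List.singleton_sublist.2 List.mem_cons_self
    exact iff_of_true (((hxv'.cons_cons y).cons x).trans (List.sublist_append_right u _))
      ((hxx.cons_cons y).trans (List.sublist_append_right u _))
  · exact occ_append_cons_cons_comm (fun h => (h.1 ▸ h.2 ▸ hab).not_gt hyx) hba

end

theorem stmt5_general (n : ℕ) (G : SimpleGraph (Fin n)) (i j : Fin n)
    (W1 W2 W3 : List (Fin n))
    (hw : Represents G (W1 ++ [i] ++ [j] ++ W2 ++ [i] ++ W3))
    (hji : j < i) :
    Represents G (W1 ++ [j] ++ [i] ++ W2 ++ [i] ++ W3) := by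
  simp only [List.append_assoc, List.cons_append] at hw ⊢
  exact hw.swap_adjacent hji (by simp)

theorem stmt5 (n : ℕ) (G : SimpleGraph (Fin n)) (i j : Fin n)
    (W1 W2 W3 : List (Fin n))
    (hw : Represents G (W1 ++ [i] ++ [j] ++ W2 ++ [i] ++ W3))
    (h1 : i ∉ W1) (h2 : i ∉ W2) (h3 : i ∉ W3) (hij : i ≠ j)
    (hji : j < i) :
    Represents G (W1 ++ [j] ++ [i] ++ W2 ++ [i] ++ W3) :=
  stmt5_general n G i j W1 W2 W3 hw hji
end

section
/- Let w = W1·[i]·W2·[j]·[i]·W3 be a 12-representant of a labeled graph G, where j > i. Then w' = W1·[i]·W2·[i]·[j]·W3 is also a 12-representant of G. -/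
lemma occ_iff {n : ℕ} (w : List (Fin n)) (a b : Fin n) :
    Occ w a b ↔ List.Sublist [a, b] w := by
  constructor
  · rintro ⟨p, q, hpq, hp, hq⟩
    rw [List.sublist_iff_exists_fin_orderEmbedding_get_eq]
    refine ⟨OrderEmbedding.ofStrictMono (fun k => if k.val = 0 then p else q) ?_, ?_⟩
    · intro x y hxy
      fin_cases x <;> fin_cases y <;> simp_all
    · intro ix
      fin_cases ix <;> simp_all
  · intro h
    rw [List.sublist_iff_exists_fin_orderEmbedding_get_eq] at h
    obtain ⟨f, hf⟩ := h
    refine ⟨f ⟨0, by simp⟩, f ⟨1, by simp⟩, f.strictMono (by norm_num), ?_, ?_⟩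
    · simpa using (hf ⟨0, by simp⟩).symm
    · simpa using (hf ⟨1, by simp⟩).symm

lemma fwd {α : Type*} (A W3 : List α) (i j a b : α) (hne : ¬(a = j ∧ b = i))
    (h : List.Sublist [a, b] (A ++ (j :: i :: W3))) :
    List.Sublist [a, b] (A ++ (i :: j :: W3)) := by
  rw [List.sublist_append_iff] at h
  obtain ⟨u, v, huv, hu, hv⟩ := h
  rcases u with _ | ⟨x, _ | ⟨y, u⟩⟩
  · -- u = [], v = [a,b] <+ j :: i :: W3
    obtain rfl : v = [a, b] := by simpa using huv.symm
    rw [List.cons_sublist_cons'] at hv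
    rcases hv with hv | ⟨rfl, hb⟩
    · rw [List.cons_sublist_cons'] at hv
      rcases hv with hv | ⟨rfl, hb⟩
      · exact ((hv.cons j).cons i).trans (List.sublist_append_right A _)
      · exact (List.cons_sublist_cons.mpr (hb.cons j)).trans
          (List.sublist_append_right A _)
    · rw [List.singleton_sublist, List.mem_cons] at hb
      rcases hb with rfl | hb
      · exact absurd ⟨rfl, rfl⟩ hne
      · -- a = j, b ∈ W3
        refine ((List.cons_sublist_cons.mpr (List.singleton_sublist.mpr hb)).cons i).trans
          (List.sublist_append_right A _)
  · -- u = [x], v = [b]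
    obtain ⟨rfl, rfl⟩ : x = a ∧ v = [b] := by simpa using huv.symm
    have hb : b ∈ j :: i :: W3 := List.singleton_sublist.mp hv
    have hb' : b ∈ i :: j :: W3 := by simp at hb ⊢; tauto
    exact (List.Sublist.append hu (List.singleton_sublist.mpr hb') : _)
  · -- u = [x, y] ++ ...
    have h3 : x = a ∧ y = b ∧ u = [] ∧ v = [] := by
      have := huv.symm
      simp only [List.cons_append, List.cons.injEq] at this
      obtain ⟨ha, hb, huv2⟩ := this
      have := List.append_eq_nil_iff.mp huv2
      exact ⟨ha, hb, this.1, this.2⟩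
    obtain ⟨rfl, rfl, rfl, rfl⟩ := h3
    exact hu.trans (List.sublist_append_left _ _)

lemma bwd {α : Type*} (A W3 : List α) (i j a b : α) (hiA : i ∈ A)
    (h : List.Sublist [a, b] (A ++ (i :: j :: W3))) :
    List.Sublist [a, b] (A ++ (j :: i :: W3)) := by
  rw [List.sublist_append_iff] at h
  obtain ⟨u, v, huv, hu, hv⟩ := h
  rcases u with _ | ⟨x, _ | ⟨y, u⟩⟩
  · obtain rfl : v = [a, b] := by simpa using huv.symm
    rw [List.cons_sublist_cons'] at hv
    rcases hv with hv | ⟨rfl, hb⟩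
    · rw [List.cons_sublist_cons'] at hv
      rcases hv with hv | ⟨rfl, hb⟩
      · -- [a,b] <+ W3
        exact ((hv.cons i).cons j).trans (List.sublist_append_right A _)
      · -- a = j, b ∈ W3
        exact (List.cons_sublist_cons.mpr (hb.cons i)).trans
          (List.sublist_append_right A _)
    · -- a = i, b ∈ j :: W3
      rw [List.singleton_sublist, List.mem_cons] at hb
      rcases hb with rfl | hb
      · -- a = i, b = j : use i ∈ A
        exact (List.singleton_sublist.mpr hiA).append
          (List.singleton_sublist.mpr List.mem_cons_self)
      · -- a = i, b ∈ W3
        refine ((List.cons_sublist_cons.mpr (List.singleton_sublist.mpr hb)).cons j).trans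
          (List.sublist_append_right A _)
  · obtain ⟨rfl, rfl⟩ : x = a ∧ v = [b] := by simpa using huv.symm
    have hb : b ∈ i :: j :: W3 := List.singleton_sublist.mp hv
    have hb' : b ∈ j :: i :: W3 := by simp at hb ⊢; tauto
    exact hu.append (List.singleton_sublist.mpr hb')
  · have h3 : x = a ∧ y = b ∧ u = [] ∧ v = [] := by
      have := huv.symm
      simp only [List.cons_append, List.cons.injEq] at this
      obtain ⟨ha, hb, huv2⟩ := this
      have := List.append_eq_nil_iff.mp huv2
      exact ⟨ha, hb, this.1, this.2⟩
    obtain ⟨rfl, rfl, rfl, rfl⟩ := h3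
    exact hu.trans (List.sublist_append_left _ _)

theorem stmt6 (n : ℕ) (G : SimpleGraph (Fin n)) (i j : Fin n)
    (W1 W2 W3 : List (Fin n))
    (hw : Represents G (W1 ++ [i] ++ W2 ++ [j] ++ [i] ++ W3))
    (hij : i < j) :
    Represents G (W1 ++ [i] ++ W2 ++ [i] ++ [j] ++ W3) := by
  have hw1 : (W1 ++ [i] ++ W2 ++ [j] ++ [i] ++ W3)
      = (W1 ++ [i] ++ W2) ++ (j :: i :: W3) := by simp
  have hw2 : (W1 ++ [i] ++ W2 ++ [i] ++ [j] ++ W3)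
      = (W1 ++ [i] ++ W2) ++ (i :: j :: W3) := by simp
  obtain ⟨hmem, hadj⟩ := hw
  constructor
  · intro v
    have := hmem v
    simp only [List.mem_append, List.mem_cons, List.mem_singleton] at this ⊢
    tauto
  · intro a b hab
    rw [hadj a b hab]
    apply not_congr
    rw [occ_iff, occ_iff, hw1, hw2]
    constructor
    · intro h
      refine fwd _ _ _ _ _ _ ?_ h
      rintro ⟨rfl, rfl⟩
      exact absurd (hab.trans hij) (lt_irrefl _)
    · intro h
      exact bwd _ _ _ _ _ _ (by simp) h
end

section
/- Every labeled graph containing three vertices a < b < c with a adjacent to b, b adjacent to c, and a non-adjacent to c (i.e., an induced copy of I_3 in reduced form) is not 12-representable. -/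
theorem Occ.or_of_mem {n : ℕ} {w : List (Fin n)} {i j k : Fin n}
    (hik : Occ w i k) (hj : j ∈ w) : Occ w i j ∨ Occ w j k := by
  obtain ⟨p, q, hpq, hp, hq⟩ := hik
  obtain ⟨r, hr⟩ := List.mem_iff_get.mp hj
  rcases lt_or_ge r q with hrq | hqr
  · exact Or.inr ⟨r, q, hrq, hr, hq⟩
  · exact Or.inl ⟨p, r, hpq.trans_le hqr, hp, hr⟩

theorem stmt9 (n : ℕ) (G : SimpleGraph (Fin n)) (a b c : Fin n)
    (hab : a < b) (hbc : b < c)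
    (e1 : G.Adj a b) (e2 : G.Adj b c) (e3 : ¬ G.Adj a c) :
    ¬ ∃ w : List (Fin n), Represents G w := by
  rintro ⟨w, hmem, hadj⟩
  have hac : Occ w a c := not_not.mp <| mt (hadj a c (hab.trans hbc)).mpr e3
  rcases hac.or_of_mem (hmem b) with hab' | hbc'
  · exact (hadj a b hab).mp e1 hab'
  · exact (hadj b c hbc).mp e2 hbc'
end

section
/- Every labeled graph containing four vertices a < b < c < d whose induced subgraph has exactly the edges ac and bd (an induced copy of J_4 in reduced form) is not 12-representable. -/
/-
The non-edges `ad` and `bc` give an `a` before a `d` and a `b` before a `c` in the word. Either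
that `b` precedes that `d`, or the `a` precedes the `d`, which comes no later than the `b`, which
precedes the `c`; so one of the edges `bd`, `ac` is contradicted.
-/

theorem Occ.occ_or_occ {n : ℕ} {w : List (Fin n)} {a b c d : Fin n}
    (had : Occ w a d) (hbc : Occ w b c) : Occ w a c ∨ Occ w b d := by
  obtain ⟨t, m, htm, hwt, hwm⟩ := had
  obtain ⟨u, v, huv, hwu, hwv⟩ := hbc
  by_cases hum : u < m
  · exact Or.inr ⟨u, m, hum, hwu, hwm⟩
  · exact Or.inl ⟨t, v, by omega, hwt, hwv⟩

namespace Represents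

variable {n : ℕ} {G : SimpleGraph (Fin n)} {w : List (Fin n)} {i j : Fin n}

theorem not_occ_of_adj_s10 (hw : Represents G w) (hij : i < j) (h : G.Adj i j) : ¬ Occ w i j :=
  (hw.2 i j hij).mp h

theorem occ_of_not_adj_s10 (hw : Represents G w) (hij : i < j) (h : ¬ G.Adj i j) : Occ w i j :=
  not_not.mp fun hocc => h ((hw.2 i j hij).mpr hocc)

end Represents

theorem stmt10_general (n : ℕ) (G : SimpleGraph (Fin n)) (a b c d : Fin n)
    (hab : a < b) (hbc : b < c) (hcd : c < d)
    (e1 : G.Adj a c) (e2 : G.Adj b d)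
    (e4 : ¬ G.Adj a d) (e5 : ¬ G.Adj b c) :
    ¬ ∃ w : List (Fin n), Represents G w := by
  rintro ⟨w, hw⟩
  have had : Occ w a d := hw.occ_of_not_adj_s10 (hab.trans (hbc.trans hcd)) e4
  have hbc' : Occ w b c := hw.occ_of_not_adj_s10 hbc e5
  rcases had.occ_or_occ hbc' with hac | hbd
  · exact hw.not_occ_of_adj_s10 (hab.trans hbc) e1 hac
  · exact hw.not_occ_of_adj_s10 (hbc.trans hcd) e2 hbd

theorem stmt10 (n : ℕ) (G : SimpleGraph (Fin n)) (a b c d : Fin n)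
    (hab : a < b) (hbc : b < c) (hcd : c < d)
    (e1 : G.Adj a c) (e2 : G.Adj b d)
    (e3 : ¬ G.Adj a b) (e4 : ¬ G.Adj a d) (e5 : ¬ G.Adj b c) (e6 : ¬ G.Adj c d) :
    ¬ ∃ w : List (Fin n), Represents G w :=
  stmt10_general n G a b c d hab hbc hcd e1 e2 e4 e5
end

section
/- Every labeled graph containing four vertices a < b < c < d whose induced subgraph has exactly the edges ad and bc (an induced copy of Q_4 in reduced form) is not 12-representable. -/
theorem occ_of_occ_of_occ_of_not_occ {n : ℕ} {w : List (Fin n)} {a b c d : Fin n}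
    (hac : Occ w a c) (hbd : Occ w b d) (hbc : ¬ Occ w b c) : Occ w a d := by
  obtain ⟨pa, pc, hpac, ha, hc⟩ := hac
  obtain ⟨pb, pd, hpbd, hb, hd⟩ := hbd
  have hpcb : pc ≤ pb := not_lt.mp fun hpbc => hbc ⟨pb, pc, hpbc, hb, hc⟩
  exact ⟨pa, pd, hpac.trans (hpcb.trans_lt hpbd), ha, hd⟩

theorem Represents.occ_of_not_adj_s11 {n : ℕ} {G : SimpleGraph (Fin n)} {w : List (Fin n)}
    (hw : Represents G w) {i j : Fin n} (hij : i < j) (h : ¬ G.Adj i j) : Occ w i j :=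
  not_not.mp fun hocc => h ((hw.2 i j hij).mpr hocc)

theorem stmt11_general (n : ℕ) (G : SimpleGraph (Fin n)) (a b c d : Fin n)
    (hab : a < b) (hbc : b < c) (hcd : c < d)
    (e1 : G.Adj a d) (e2 : G.Adj b c)
    (e4 : ¬ G.Adj a c) (e5 : ¬ G.Adj b d) :
    ¬ ∃ w : List (Fin n), Represents G w := by
  rintro ⟨w, hw⟩
  have hac : Occ w a c := hw.occ_of_not_adj_s11 (hab.trans hbc) e4
  have hbd : Occ w b d := hw.occ_of_not_adj_s11 (hbc.trans hcd) e5
  have hnbc : ¬ Occ w b c := (hw.2 b c hbc).mp e2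
  exact (hw.2 a d (hab.trans (hbc.trans hcd))).mp e1 (occ_of_occ_of_occ_of_not_occ hac hbd hnbc)

theorem stmt11 (n : ℕ) (G : SimpleGraph (Fin n)) (a b c d : Fin n)
    (hab : a < b) (hbc : b < c) (hcd : c < d)
    (e1 : G.Adj a d) (e2 : G.Adj b c)
    (e3 : ¬ G.Adj a b) (e4 : ¬ G.Adj a c) (e5 : ¬ G.Adj b d) (e6 : ¬ G.Adj c d) :
    ¬ ∃ w : List (Fin n), Represents G w :=
  stmt11_general n G a b c d hab hbc hcd e1 e2 e4 e5
end

section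
/- Let G be a labeled graph on [n] with a good vertex j, 12-represented by a word w such that: the letter after the first occurrence of every letter i ≥ j occurring twice is larger than that letter, and the letter before the second occurrence of every letter k ≤ j occurring twice is smaller than that letter. Then j occurs exactly once in w. -/
/-- The letter immediately following the first occurrence of `i` in `w` is larger than `i`. -/
def SuccOfFirstGT {n : ℕ} (i : Fin n) (w : List (Fin n)) : Prop :=
  ∃ (U V : List (Fin n)) (x : Fin n), w = U ++ [i, x] ++ V ∧ i ∉ U ∧ i < x

/-- The letter immediately preceding the last occurrence of `k` in `w` is smaller than `k`. -/
def PredOfLastLT {n : ℕ} (k : Fin n) (w : List (Fin n)) : Prop :=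
  ∃ (U V : List (Fin n)) (x : Fin n), w = U ++ [x, k] ++ V ∧ k ∉ V ∧ x < k

section Helpers

variable {α : Type*} [DecidableEq α]

lemma occAux_two_le_count {l : List α} {i k : ℕ} {v : α} (hik : i < k)
    (hi : l[i]? = some v) (hk : l[k]? = some v) : 2 ≤ l.count v := by
  have h1 : v ∈ l.take k := by
    rw [List.mem_iff_getElem?]
    exact ⟨i, by rw [List.getElem?_take, if_pos hik]; exact hi⟩
  have h2 : v ∈ l.drop k := by
    rw [List.mem_iff_getElem?]
    exact ⟨0, by rw [List.getElem?_drop]; simpa using hk⟩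
  have := List.take_append_drop k l
  calc 2 ≤ (l.take k).count v + (l.drop k).count v := by
        have a1 := List.count_pos_iff.mpr h1
        have a2 := List.count_pos_iff.mpr h2
        omega
    _ = l.count v := by rw [← List.count_append, this]

lemma occAux_three_le_count {l : List α} {i k m : ℕ} {v : α} (hik : i < k) (hkm : k < m)
    (hi : l[i]? = some v) (hk : l[k]? = some v) (hm : l[m]? = some v) : 3 ≤ l.count v := by
  have h1 : 2 ≤ (l.take m).count v := by
    refine occAux_two_le_count hik ?_ ?_
    · rw [List.getElem?_take, if_pos (hik.trans hkm)]; exact hi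
    · rw [List.getElem?_take, if_pos hkm]; exact hk
  have h2 : v ∈ l.drop m := by
    rw [List.mem_iff_getElem?]
    exact ⟨0, by rw [List.getElem?_drop]; simpa using hm⟩
  have := List.take_append_drop m l
  have a2 := List.count_pos_iff.mpr h2
  have : (l.take m).count v + (l.drop m).count v = l.count v := by
    rw [← List.count_append, this]
  omega

/-- If `v` occurs at positions `i < k` and the count is at most 2, then any
position of `v` is `i` or `k`. -/
lemma occAux_pos_cases {l : List α} {i k m : ℕ} {v : α} (hc : l.count v ≤ 2) (hik : i < k)
    (hi : l[i]? = some v) (hk : l[k]? = some v) (hm : l[m]? = some v) : m = i ∨ m = k := by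
  by_contra h
  push_neg at h
  obtain ⟨hmi, hmk⟩ := h
  rcases Nat.lt_trichotomy m i with h1 | h1 | h1
  · exact absurd (occAux_three_le_count h1 hik hm hi hk) (by omega)
  · exact hmi h1
  · rcases Nat.lt_trichotomy m k with h2 | h2 | h2
    · exact absurd (occAux_three_le_count h1 h2 hi hm hk) (by omega)
    · exact hmk h2
    · exact absurd (occAux_three_le_count hik h2 hi hk hm) (by omega)

lemma occAux_decomp {w U V : List α} {a b : α} (h : w = U ++ [a, b] ++ V) :
    w[U.length]? = some a ∧ w[U.length + 1]? = some b := by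
  subst h
  rw [List.append_assoc]
  constructor
  · rw [List.getElem?_append_right (le_refl _)]
    simp
  · rw [List.getElem?_append_right (by omega)]
    simp

lemma occAux_mem_left {w U V : List α} (h : w = U ++ V) {i : ℕ} {v : α}
    (hv : w[i]? = some v) (hi : i < U.length) : v ∈ U := by
  subst h
  rw [List.getElem?_append, if_pos hi] at hv
  exact List.mem_iff_getElem?.mpr ⟨i, hv⟩

lemma occAux_mem_right {w U V : List α} (h : w = U ++ V) {i : ℕ} {v : α}
    (hv : w[i]? = some v) (hi : U.length ≤ i) : v ∈ V := by
  subst h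
  rw [List.getElem?_append_right hi] at hv
  exact List.mem_iff_getElem?.mpr ⟨_, hv⟩

end Helpers

lemma occAux_getElem?_append {α : Type*} {w U V : List α} (h : w = U ++ V) (i : ℕ) :
    w[U.length + i]? = V[i]? := by
  subst h
  rw [List.getElem?_append_right (by omega)]
  congr 1
  omega

lemma occ_of_getElem? {n : ℕ} {w : List (Fin n)} {u v : Fin n} {i k : ℕ} (hik : i < k)
    (hi : w[i]? = some u) (hk : w[k]? = some v) : Occ w u v := by
  obtain ⟨hi', hieq⟩ := List.getElem?_eq_some_iff.mp hi
  obtain ⟨hk', hkeq⟩ := List.getElem?_eq_some_iff.mp hk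
  exact ⟨⟨i, hi'⟩, ⟨k, hk'⟩, hik, by simpa [List.get_eq_getElem] using hieq,
    by simpa [List.get_eq_getElem] using hkeq⟩

/-- The key inductive step: if a letter `x > j` occurs at position `t` after an occurrence
of `j`, and a letter `y < j` occurs at a later position `s` before another occurrence of `j`,
then we get a contradiction, by induction on the gap `s - t`. -/
lemma occ_key {n : ℕ} (G : SimpleGraph (Fin n)) (j : Fin n) (w : List (Fin n))
    (hw : Represents G w) (hgood : ¬ Bad G j) (h2 : ∀ v : Fin n, w.count v ≤ 2)
    (hsucc : ∀ i : Fin n, j ≤ i → w.count i = 2 → SuccOfFirstGT i w)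
    (hpred : ∀ k : Fin n, k ≤ j → w.count k = 2 → PredOfLastLT k w) :
    ∀ d t s π σ : ℕ, ∀ x y : Fin n, s - t ≤ d → π < t → t < s → s < σ →
      w[π]? = some j → w[σ]? = some j → w[t]? = some x → w[s]? = some y →
      j < x → y < j → False := by
  intro d
  induction d with
  | zero => intro t s π σ x y hd hπt hts hsσ hπ hσ ht hs hjx hyj; omega
  | succ d ih =>
    intro t s π σ x y hd hπt hts hsσ hπ hσ ht hs hjx hyj
    have hOjx : Occ w j x := occ_of_getElem? hπt hπ ht
    have hnajx : ¬ G.Adj j x := fun h => ((hw.2 j x hjx).mp h) hOjx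
    have hOyj : Occ w y j := occ_of_getElem? hsσ hs hσ
    have hnayj : ¬ G.Adj y j := fun h => ((hw.2 y j hyj).mp h) hOyj
    have hOyx : Occ w y x := by
      by_contra hno
      exact hgood ⟨y, x, hyj, hjx, hnayj, hnajx, (hw.2 y x (hyj.trans hjx)).mpr hno⟩
    obtain ⟨⟨a, ha⟩, ⟨b, hb⟩, hab, hay, hbx⟩ := hOyx
    simp only [List.get_eq_getElem] at hay hbx
    have ha' : w[a]? = some y := List.getElem?_eq_some_iff.mpr ⟨ha, hay⟩
    have hb' : w[b]? = some x := List.getElem?_eq_some_iff.mpr ⟨hb, hbx⟩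
    have hab' : a < b := hab
    by_cases hcase : s < b
    · -- x occurs at t and at b > s : advance on the x side
      have htb : t < b := hts.trans hcase
      have hcnt : w.count x = 2 := le_antisymm (h2 x) (occAux_two_le_count htb ht hb')
      obtain ⟨U, V, x', hdec, hxU, hxx'⟩ := hsucc x hjx.le hcnt
      obtain ⟨hU1, hU2⟩ := occAux_decomp hdec
      have hUt : U.length = t := by
        rcases occAux_pos_cases (h2 x) htb ht hb' hU1 with h | h
        · exact h
        · exfalso
          have hdec' : w = U ++ ([x, x'] ++ V) := by rw [hdec, List.append_assoc]
          exact hxU (occAux_mem_left hdec' ht (by omega))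
      rw [hUt] at hU2
      have ht1s : t + 1 < s := by
        rcases Nat.lt_or_ge (t+1) s with h | h
        · exact h
        · exfalso
          have : t + 1 = s := by omega
          rw [this, hs] at hU2
          have : y = x' := by injection hU2
          have : y < x' := hyj.trans (hjx.trans hxx')
          simp_all
      exact ih (t+1) s π σ x' y (by omega) (by omega) ht1s hsσ hπ hσ hU2 hs
        (hjx.trans hxx') hyj
    · -- all occurrences of x are ≤ s, so y occurs at a < s : advance on the y side
      have has : a < s := lt_of_lt_of_le hab' (by omega)
      have hcnt : w.count y = 2 := le_antisymm (h2 y) (occAux_two_le_count has ha' hs)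
      obtain ⟨U, V, x', hdec, hyV, hx'y⟩ := hpred y hyj.le hcnt
      obtain ⟨hU1, hU2⟩ := occAux_decomp hdec
      have hUs : U.length + 1 = s := by
        rcases occAux_pos_cases (h2 y) has ha' hs hU2 with h | h
        · exfalso
          have hlen : (U ++ [x', y]).length = U.length + 2 := by simp
          exact hyV (occAux_mem_right hdec hs (by omega))
        · exact h
      have hU1' : w[s-1]? = some x' := by
        have : U.length = s - 1 := by omega
        rwa [this] at hU1
      have hts1 : t < s - 1 := by
        rcases Nat.lt_or_ge t (s-1) with h | h
        · exact h
        · exfalso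
          have : t = s - 1 := by omega
          rw [this, hU1'] at ht
          have : x' = x := by injection ht
          have : x' < x := (hx'y.trans hyj).trans hjx
          simp_all
      exact ih t (s-1) π σ x x' (by omega) hπt hts1 (by omega) hπ hσ ht hU1'
        hjx (hx'y.trans hyj)

theorem stmt18 (n : ℕ) (G : SimpleGraph (Fin n)) (j : Fin n)
    (w : List (Fin n)) (hw : Represents G w)
    (hgood : ¬ Bad G j)
    (h2 : ∀ v : Fin n, w.count v ≤ 2)
    (hsucc : ∀ i : Fin n, j ≤ i → w.count i = 2 → SuccOfFirstGT i w)
    (hpred : ∀ k : Fin n, k ≤ j → w.count k = 2 → PredOfLastLT k w) :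
    w.count j = 1 := by
  have h1 : 0 < w.count j := List.count_pos_iff.mpr (hw.1 j)
  rcases Nat.lt_or_ge (w.count j) 2 with h | h
  · omega
  exfalso
  have hc2 : w.count j = 2 := le_antisymm (h2 j) h
  obtain ⟨U, V, x, hdx, hjU, hjx⟩ := hsucc j le_rfl hc2
  obtain ⟨U', V', y, hdy, hjV', hyj⟩ := hpred j le_rfl hc2
  obtain ⟨hP1, hP2⟩ := occAux_decomp hdx
  obtain ⟨hS1, hS2⟩ := occAux_decomp hdy
  set π := U.length with hπdef
  set s := U'.length with hsdef
  -- count of j in V is 1, so j occurs somewhere in V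
  have hcV : V.count j = 1 := by
    have : w.count j = U.count j + ([j, x] : List (Fin n)).count j + V.count j := by
      rw [hdx, List.count_append, List.count_append]
    have hU0 : U.count j = 0 := List.count_eq_zero.mpr hjU
    have hx : ([j, x] : List (Fin n)).count j = 1 := by
      have : x ≠ j := ne_of_gt hjx
      simp [List.count_cons, this]
    omega
  obtain ⟨ρ', hρ'⟩ := List.mem_iff_getElem?.mp (List.count_pos_iff.mp (show 0 < V.count j by omega))
  have hρ : w[π + 2 + ρ']? = some j := by
    have h' := occAux_getElem?_append hdx ρ'
    rw [hρ'] at h'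
    simp only [List.length_append, List.length_cons, List.length_nil] at h'
    have heq : π + 2 + ρ' = U.length + (0 + 1 + 1) + ρ' := by omega
    rw [heq]
    exact h'
  -- every occurrence of j is at position ≤ s + 1
  have hρle : π + 2 + ρ' ≤ s + 1 := by
    by_contra hcon
    push_neg at hcon
    have : (U' ++ [y, j]).length = s + 2 := by simp [hsdef]
    exact hjV' (occAux_mem_right hdy hρ (by omega))
  have hts : π + 1 < s := by
    rcases Nat.lt_or_ge (π+1) s with h' | h'
    · exact h'
    · exfalso
      have : π + 1 = s := by omega
      rw [this, hS1] at hP2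
      have : y = x := by injection hP2
      have : y < x := hyj.trans hjx
      simp_all
  exact occ_key G j w hw hgood h2 hsucc hpred (s - (π+1)) (π+1) s π (s+1) x y
    le_rfl (by omega) hts (by omega) hP1 hS2 hP2 hS1 hjx hyj
end

section
/- For a labeled graph G on [n] that admits a 12-representant in which each letter occurs at most twice, the minimum length of a 12-representant of G equals n + b, where b is the number of bad vertices of G. -/
namespace Stmt19Aux

def OccC {α : Type*} (w : List α) (i j : α) : Prop :=
  ∃ k, i ∈ w.take k ∧ j ∈ w.drop k

section helpers
variable {α : Type*} {i j a : α}

lemma mem_take_iff' {l : List α} {k : ℕ} :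
    a ∈ l.take k ↔ ∃ t, ∃ h : t < l.length, t < k ∧ l[t] = a := by
  rw [List.mem_iff_getElem]
  constructor
  · rintro ⟨t, ht, he⟩
    have ht' : t < min k l.length := by simpa using ht
    exact ⟨t, by omega, by omega, by rw [← he, List.getElem_take]⟩
  · rintro ⟨t, h, htk, he⟩
    exact ⟨t, by simp; omega, by rw [List.getElem_take]; exact he⟩

lemma mem_drop_iff' {l : List α} {k : ℕ} :
    a ∈ l.drop k ↔ ∃ t, ∃ h : k + t < l.length, l[k + t] = a := by
  rw [List.mem_iff_getElem]
  constructor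
  · rintro ⟨t, ht, he⟩
    have ht' : t < l.length - k := by simpa using ht
    exact ⟨t, by omega, by rw [← he, List.getElem_drop]⟩
  · rintro ⟨t, h, he⟩
    exact ⟨t, by simp; omega, by rw [List.getElem_drop]; exact he⟩

lemma take_subset_take {l : List α} {k m : ℕ} (h : k ≤ m) : l.take k ⊆ l.take m := by
  have : l.take k = (l.take m).take k := by
    rw [List.take_take, min_eq_left h]
  rw [this]; exact List.take_subset _ _

lemma drop_subset_drop {l : List α} {k m : ℕ} (h : m ≤ k) : l.drop k ⊆ l.drop m := by
  have : l.drop k = (l.drop m).drop (k - m) := by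
    rw [List.drop_drop]; congr 1; omega
  rw [this]; exact List.drop_subset _ _

lemma occC_append {x y : List α} :
    OccC (x ++ y) i j ↔ OccC x i j ∨ OccC y i j ∨ (i ∈ x ∧ j ∈ y) := by
  constructor
  · rintro ⟨k, hi, hj⟩
    rw [List.take_append, List.mem_append] at hi
    rw [List.drop_append, List.mem_append] at hj
    rcases hi with hi | hi
    · rcases hj with hj | hj
      · exact Or.inl ⟨k, hi, hj⟩
      · exact Or.inr (Or.inr ⟨List.mem_of_mem_take hi, List.mem_of_mem_drop hj⟩)
    · have hk : x.length < k := by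
        by_contra h
        rw [Nat.sub_eq_zero_of_le (by omega)] at hi
        simp at hi
      rcases hj with hj | hj
      · have := List.mem_of_mem_drop hj
        rw [List.drop_eq_nil_of_le (by omega)] at hj
        simp at hj
      · exact Or.inr (Or.inl ⟨k - x.length, hi, hj⟩)
  · rintro (⟨k, hi, hj⟩ | ⟨k, hi, hj⟩ | ⟨hi, hj⟩)
    · refine ⟨k, ?_, ?_⟩
      · rw [List.take_append, List.mem_append]
        exact Or.inl hi
      · rw [List.drop_append, List.mem_append]
        exact Or.inl hj
    · refine ⟨x.length + k, ?_, ?_⟩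
      · rw [List.take_append, List.mem_append]
        right
        have : x.length + k - x.length = k := by omega
        rw [this]; exact hi
      · rw [List.drop_append, List.mem_append]
        right
        have : x.length + k - x.length = k := by omega
        rw [this]; exact hj
    · refine ⟨x.length, ?_, ?_⟩
      · rw [List.take_append, List.mem_append]
        left; simpa using hi
      · rw [List.drop_append, List.mem_append]
        right; simpa using hj

lemma occC_cons {a : α} {l : List α} (h : OccC l i j) : OccC (a :: l) i j := by
  obtain ⟨k, hi, hj⟩ := h
  exact ⟨k + 1, by simpa using Or.inr hi, by simpa using hj⟩

lemma occC_sublist {l₁ l₂ : List α} (h : List.Sublist l₁ l₂) (ho : OccC l₁ i j) :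
    OccC l₂ i j := by
  induction h with
  | slnil => exact ho
  | cons a h ih => exact occC_cons (ih ho)
  | cons_cons a h ih =>
    obtain ⟨k, hi, hj⟩ := ho
    match k with
    | 0 => simp at hi
    | k + 1 =>
      simp only [List.take_succ_cons] at hi
      simp only [List.drop_succ_cons] at hj
      rcases List.mem_cons.mp hi with rfl | hi
      · exact ⟨1, by simp, by simpa using h.subset (List.mem_of_mem_drop hj)⟩
      · exact occC_cons (ih ⟨k, hi, hj⟩)

lemma occC_filter {p : α → Bool} {l : List α} (hi : p i = true) (hj : p j = true) :
    OccC (l.filter p) i j ↔ OccC l i j := by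
  constructor
  · exact occC_sublist List.filter_sublist
  · rintro ⟨k, hik, hjk⟩
    have hsplit : l.filter p = (l.take k).filter p ++ (l.drop k).filter p := by
      rw [← List.filter_append, List.take_append_drop]
    refine ⟨((l.take k).filter p).length, ?_, ?_⟩
    · rw [hsplit, List.take_left]
      exact List.mem_filter.mpr ⟨hik, hi⟩
    · rw [hsplit, List.drop_left]
      exact List.mem_filter.mpr ⟨hjk, hj⟩

lemma occC_cons_iff {a : α} {l : List α} (h : i ≠ a) : OccC (a :: l) i j ↔ OccC l i j := by
  constructor
  · rintro ⟨k, hik, hjk⟩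
    match k, hik, hjk with
    | 0, hik, _ => simp at hik
    | k+1, hik, hjk =>
      rw [List.take_succ_cons] at hik
      rw [List.drop_succ_cons] at hjk
      rcases List.mem_cons.mp hik with rfl | hik
      · exact absurd rfl h
      · exact ⟨k, hik, hjk⟩
  · exact occC_cons


end helpers

lemma occ_iff_occC {n : ℕ} (w : List (Fin n)) (i j : Fin n) : Occ w i j ↔ OccC w i j := by
  constructor
  · rintro ⟨p, q, hpq, hp, hq⟩
    have hpq' : (p : ℕ) < (q : ℕ) := hpq
    refine ⟨q, ?_, ?_⟩
    · exact mem_take_iff'.mpr ⟨p, p.isLt, hpq', hp⟩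
    · exact mem_drop_iff'.mpr ⟨0, by omega, by simpa using hq⟩
  · rintro ⟨k, hi, hj⟩
    obtain ⟨p, hp, hpk, hpe⟩ := mem_take_iff'.mp hi
    obtain ⟨q, hq, hqe⟩ := mem_drop_iff'.mp hj
    exact ⟨⟨p, hp⟩, ⟨k + q, hq⟩, by simp only [Fin.lt_def]; omega, hpe, hqe⟩

lemma length_eq_sum_count {n : ℕ} (w : List (Fin n)) :
    w.length = ∑ v : Fin n, w.count v := by
  induction w with
  | nil => simp
  | cons a t ih =>
    simp only [List.length_cons, List.count_cons, ih]
    rw [Finset.sum_add_distrib]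
    simp [Finset.sum_ite_eq]

lemma two_le_count_of_ne {n : ℕ} {w : List (Fin n)} {x : Fin n} {p q : Fin w.length}
    (hpq : p < q) (hp : w.get p = x) (hq : w.get q = x) : 2 ≤ w.count x := by
  have h1 : x ∈ w.take q := mem_take_iff'.mpr ⟨p, p.isLt, hpq, hp⟩
  have h2 : x ∈ w.drop q := mem_drop_iff'.mpr ⟨0, by omega, by simpa using hq⟩
  calc (2:ℕ) = 1 + 1 := rfl
  _ ≤ (w.take q).count x + (w.drop q).count x :=
      Nat.add_le_add (List.count_pos_iff.mpr h1) (List.count_pos_iff.mpr h2)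
  _ = w.count x := by rw [← List.count_append, List.take_append_drop]

lemma bad_two_le_count {n : ℕ} {G : SimpleGraph (Fin n)} {w : List (Fin n)} {v : Fin n}
    (hw : Represents G w) (hb : Bad G v) : 2 ≤ w.count v := by
  obtain ⟨a, c, hav, hvc, hnav, hnvc, hac⟩ := hb
  have h1 : Occ w a v := not_not.mp (fun h => hnav ((hw.2 a v hav).mpr h))
  have h2 : Occ w v c := not_not.mp (fun h => hnvc ((hw.2 v c hvc).mpr h))
  have h3 : ¬ Occ w a c := (hw.2 a c (lt_trans hav hvc)).mp hac
  obtain ⟨p, q, hpq, hp, hq⟩ := h1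
  obtain ⟨p', q', hpq', hp', hq'⟩ := h2
  by_cases hqp : q = p'
  · exact absurd ⟨p, q', lt_trans (hqp ▸ hpq) hpq', hp, hq'⟩ h3
  · rcases lt_or_gt_of_ne hqp with h | h
    · exact two_le_count_of_ne h hq hp'
    · exact two_le_count_of_ne h hp' hq

lemma lower_bound {n : ℕ} {G : SimpleGraph (Fin n)} [DecidablePred (Bad G)]
    {w : List (Fin n)} (hw : Represents G w) :
    n + (Finset.univ.filter (Bad G)).card ≤ w.length := by
  have key : ∀ v : Fin n, (1 + if Bad G v then 1 else 0) ≤ w.count v := by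
    intro v
    by_cases hb : Bad G v
    · simpa [hb] using bad_two_le_count hw hb
    · simpa [hb] using List.count_pos_iff.mpr (hw.1 v)
  calc n + (Finset.univ.filter (Bad G)).card
      = ∑ v : Fin n, (1 + if Bad G v then 1 else 0) := by
        rw [Finset.sum_add_distrib, Finset.sum_const, ← Finset.card_filter]
        simp [mul_comm]
  _ ≤ ∑ v : Fin n, w.count v := Finset.sum_le_sum (fun v _ => key v)
  _ = w.length := (length_eq_sum_count w).symm

lemma step {n : ℕ} {G : SimpleGraph (Fin n)} {w : List (Fin n)} {v : Fin n}
    (hw : Represents G w) (hv : ¬ Bad G v) (hcv : 2 ≤ w.count v) :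
    ∃ w' : List (Fin n), Represents G w' ∧ w'.count v = 1 ∧
      (∀ u : Fin n, u ≠ v → w'.count u = w.count u) := by
  classical
  have hvw : v ∈ w := List.count_pos_iff.mp (by omega)
  obtain ⟨t0, ht0, ht0e⟩ := List.mem_iff_getElem.mp hvw
  have hPex : ∃ k, ∃ h : k < w.length, w[k] = v := ⟨t0, ht0, ht0e⟩
  set P : ℕ → Prop := fun k => ∃ h : k < w.length, w[k] = v with hPdef
  set p1 := Nat.find hPex with hp1def
  set p2 := Nat.findGreatest P w.length with hp2def
  have hp1 : P p1 := Nat.find_spec hPex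
  have hp1min : ∀ k, P k → p1 ≤ k := fun k hk => Nat.find_min' hPex hk
  have hp2 : P p2 := Nat.findGreatest_spec (le_of_lt ht0) ⟨ht0, ht0e⟩
  have hp2max : ∀ k, P k → k ≤ p2 := fun k hk => Nat.le_findGreatest (le_of_lt hk.1) hk
  obtain ⟨hp1lt, hp1e⟩ := hp1
  obtain ⟨hp2lt, hp2e⟩ := hp2
  have hvnt : v ∉ w.take p1 := by
    intro hmem
    obtain ⟨t, h, htk, he⟩ := mem_take_iff'.mp hmem
    have := hp1min t ⟨h, he⟩; omega
  have hvnd : v ∉ w.drop (p2+1) := by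
    intro hmem
    obtain ⟨t, h, he⟩ := mem_drop_iff'.mp hmem
    have := hp2max (p2+1+t) ⟨h, he⟩; omega
  have hp1p2 : p1 < p2 := by
    have h12 : p1 ≤ p2 := hp1min p2 ⟨hp2lt, hp2e⟩
    rcases eq_or_lt_of_le h12 with heq | h
    · exfalso
      have h0a : (w.take p1).count v = 0 := List.count_eq_zero.mpr hvnt
      have h0b : (w.drop (p1+1)).count v = 0 := by
        rw [heq]; exact List.count_eq_zero.mpr hvnd
      have hw2 : w.count v =
          (w.take p1).count v + (((w.drop (p1+1)).count v) + 1) := by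
        conv_lhs => rw [← List.take_append_drop p1 w]
        rw [List.count_append, List.drop_eq_getElem_cons hp1lt, List.count_cons]
        simp [hp1e]
      omega
    · exact h
  -- occurrence characterisations
  have hOiv : ∀ i : Fin n, OccC w i v ↔ i ∈ w.take p2 := by
    intro i
    constructor
    · rintro ⟨k, hik, hvk⟩
      obtain ⟨t, h, he⟩ := mem_drop_iff'.mp hvk
      have hk2 : k + t ≤ p2 := hp2max _ ⟨h, he⟩
      exact take_subset_take (by omega) hik
    · intro him
      exact ⟨p2, him, mem_drop_iff'.mpr ⟨0, by omega, by simpa using hp2e⟩⟩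
  have hOvj : ∀ j : Fin n, OccC w v j ↔ j ∈ w.drop (p1+1) := by
    intro j
    constructor
    · rintro ⟨k, hvk, hjk⟩
      obtain ⟨t, h, htk, he⟩ := mem_take_iff'.mp hvk
      have := hp1min t ⟨h, he⟩
      exact drop_subset_drop (by omega) hjk
    · intro hjm
      exact ⟨p1 + 1, mem_take_iff'.mpr ⟨p1, hp1lt, by omega, hp1e⟩, hjm⟩
  -- choice of the cut U
  set Q : ℕ → Prop := fun k => p1 + 1 ≤ k ∧
    ∀ j : Fin n, v < j → j ∈ w.drop (p1+1) → j ∈ w.drop k with hQdef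
  set U := Nat.findGreatest Q p2 with hUdef
  have hQp1 : Q (p1+1) := ⟨le_refl _, fun j _ h => h⟩
  have hU : Q U := Nat.findGreatest_spec (by omega : p1+1 ≤ p2) hQp1
  have hUle : U ≤ p2 := Nat.findGreatest_le p2
  have hUmax : ∀ k, k ≤ p2 → Q k → k ≤ U := fun k hk hq => Nat.le_findGreatest hk hq
  obtain ⟨hUge, hUβ⟩ := hU
  have hUlen : U ≤ w.length := by omega
  -- the key property α, using goodness of v
  have hα : ∀ i : Fin n, i < v → i ∈ w.take p2 → i ∈ w.take U := by
    intro i hiv himem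
    by_contra hnot
    have hUlt : U < p2 := by
      rcases lt_or_eq_of_le hUle with h | heq
      · exact h
      · rw [heq] at hnot; exact absurd himem hnot
    have hQfail : ¬ Q (U+1) := fun hq => by have := hUmax (U+1) (by omega) hq; omega
    rw [hQdef] at hQfail
    have hex : ∃ j : Fin n, v < j ∧ j ∈ w.drop (p1+1) ∧ j ∉ w.drop (U+1) := by
      by_contra hcon
      push_neg at hcon
      exact hQfail ⟨by omega, hcon⟩
    obtain ⟨j, hvj, hjd, hjnd⟩ := hex
    have hAdj : G.Adj i j := by
      rw [hw.2 i j (lt_trans hiv hvj), occ_iff_occC]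
      rintro ⟨k, hik, hjk⟩
      obtain ⟨t, h, he⟩ := mem_drop_iff'.mp hjk
      have hktU : k + t ≤ U := by
        by_contra hgt
        exact hjnd (drop_subset_drop (by omega : U + 1 ≤ k + t)
          (mem_drop_iff'.mpr ⟨0, by omega, by simpa using he⟩))
      exact hnot (take_subset_take (by omega) hik)
    have hnAiv : ¬ G.Adj i v := by
      rw [hw.2 i v hiv, not_not, occ_iff_occC]
      exact (hOiv i).mpr himem
    have hnAvj : ¬ G.Adj v j := by
      rw [hw.2 v j hvj, not_not, occ_iff_occC]
      exact (hOvj j).mpr hjd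
    exact hv ⟨i, j, hiv, hvj, hnAiv, hnAvj, hAdj⟩
  -- the new word
  obtain ⟨A, hA⟩ : ∃ A, A = (w.take U).filter (fun x => x ≠ v) := ⟨_, rfl⟩
  obtain ⟨B, hB⟩ : ∃ B, B = (w.drop U).filter (fun x => x ≠ v) := ⟨_, rfl⟩
  have hvA : v ∉ A := by rw [hA]; simp [List.mem_filter]
  have hvB : v ∉ B := by rw [hB]; simp [List.mem_filter]
  have hmemA : ∀ x : Fin n, x ≠ v → (x ∈ A ↔ x ∈ w.take U) := by
    intro x hx; rw [hA]; simp [List.mem_filter, hx]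
  have hmemB : ∀ x : Fin n, x ≠ v → (x ∈ B ↔ x ∈ w.drop U) := by
    intro x hx; rw [hB]; simp [List.mem_filter, hx]
  have hOc_iv : ∀ i : Fin n, i ≠ v → (OccC (A ++ v :: B) i v ↔ i ∈ w.take U) := by
    intro i hi
    rw [occC_append]
    constructor
    · rintro (⟨k, _, hvd⟩ | ⟨k, hik, hvd⟩ | ⟨hiA, _⟩)
      · exact absurd (List.mem_of_mem_drop hvd) hvA
      · match k, hik, hvd with
        | 0, hik, _ => simp at hik
        | k+1, _, hvd =>
          rw [List.drop_succ_cons] at hvd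
          exact absurd (List.mem_of_mem_drop hvd) hvB
      · exact (hmemA i hi).mp hiA
    · intro him
      exact Or.inr (Or.inr ⟨(hmemA i hi).mpr him, List.mem_cons_self⟩)
  have hOc_vj : ∀ j : Fin n, j ≠ v → (OccC (A ++ v :: B) v j ↔ j ∈ w.drop U) := by
    intro j hj
    rw [occC_append]
    constructor
    · rintro (⟨k, hvt, _⟩ | ⟨k, hvt, hjd⟩ | ⟨hvA', _⟩)
      · exact absurd (List.mem_of_mem_take hvt) hvA
      · match k, hvt, hjd with
        | 0, hvt, _ => simp at hvt
        | k+1, _, hjd =>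
          rw [List.drop_succ_cons] at hjd
          exact (hmemB j hj).mp (List.mem_of_mem_drop hjd)
      · exact absurd hvA' hvA
    · intro hjm
      exact Or.inr (Or.inl ⟨1, by simp, by simpa using (hmemB j hj).mpr hjm⟩)
  have hOc_ij : ∀ i j : Fin n, i ≠ v → j ≠ v →
      (OccC (A ++ v :: B) i j ↔ OccC w i j) := by
    intro i j hi hj
    have hsp := (occC_append (x := w.take U) (y := w.drop U) (i := i) (j := j))
    rw [List.take_append_drop] at hsp
    have h1 : OccC A i j ↔ OccC (w.take U) i j := by
      rw [hA]; exact occC_filter (by simp [hi]) (by simp [hj])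
    have h2 : OccC B i j ↔ OccC (w.drop U) i j := by
      rw [hB]; exact occC_filter (by simp [hi]) (by simp [hj])
    have h3 : j ∈ v :: B ↔ j ∈ w.drop U := by
      rw [List.mem_cons, hmemB j hj]
      simp [hj]
    rw [occC_append, occC_cons_iff hi, h1, h2, h3, hmemA i hi, hsp]
  refine ⟨A ++ v :: B, ⟨?_, ?_⟩, ?_, ?_⟩
  · -- membership
    intro u
    by_cases hu : u = v
    · subst hu; exact List.mem_append_right _ List.mem_cons_self
    · have hmu := hw.1 u
      rw [← List.take_append_drop U w] at hmu
      rcases List.mem_append.mp hmu with h | h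
      · exact List.mem_append_left _ ((hmemA u hu).mpr h)
      · exact List.mem_append_right _ (List.mem_cons_of_mem v ((hmemB u hu).mpr h))
  · -- edges
    intro i j hij
    rw [occ_iff_occC]
    by_cases hj : j = v
    · subst hj
      have hi : i ≠ _ := ne_of_lt hij
      rw [hOc_iv i hi]
      have hiff : i ∈ w.take U ↔ i ∈ w.take p2 :=
        ⟨fun h => take_subset_take hUle h, fun h => hα i hij h⟩
      rw [hiff, ← hOiv i, ← occ_iff_occC]
      exact hw.2 i _ hij
    · by_cases hi : i = v
      · subst hi
        rw [hOc_vj j hj]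
        have hiff : j ∈ w.drop U ↔ j ∈ w.drop (p1+1) :=
          ⟨fun h => drop_subset_drop hUge h, fun h => hUβ j hij h⟩
        rw [hiff, ← hOvj j, ← occ_iff_occC]
        exact hw.2 _ j hij
      · rw [hOc_ij i j hi hj, ← occ_iff_occC]
        exact hw.2 i j hij
  · -- count of v
    have h1 : A.count v = 0 := List.count_eq_zero.mpr hvA
    have h2 : B.count v = 0 := List.count_eq_zero.mpr hvB
    rw [List.count_append, List.count_cons_self, h1, h2]
  · -- other counts
    intro u hu
    have h1 : A.count u = (w.take U).count u := by
      rw [hA]; exact List.count_filter (by simp [hu])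
    have h2 : B.count u = (w.drop U).count u := by
      rw [hB]; exact List.count_filter (by simp [hu])
    have h3 : w.count u = (w.take U).count u + (w.drop U).count u := by
      rw [← List.count_append, List.take_append_drop]
    rw [List.count_append, List.count_cons_of_ne hu.symm, h1, h2, h3]

lemma reduce {n : ℕ} {G : SimpleGraph (Fin n)} [DecidablePred (Bad G)] :
    ∀ N (w : List (Fin n)), w.length ≤ N → Represents G w → (∀ u, w.count u ≤ 2) →
    ∃ w', Represents G w' ∧ ∀ u : Fin n, w'.count u ≤ if Bad G u then 2 else 1 := by
  intro N
  induction N with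
  | zero =>
    intro w hlen hw h2
    refine ⟨w, hw, fun u => ?_⟩
    have h := List.count_le_length (a := u) (l := w)
    split <;> omega
  | succ N ih =>
    intro w hlen hw h2
    by_cases hex : ∃ v : Fin n, ¬ Bad G v ∧ 2 ≤ w.count v
    · obtain ⟨v, hv, hcv⟩ := hex
      obtain ⟨w2, hw2, hc1, hco⟩ := step hw hv hcv
      have h2' : ∀ u, w2.count u ≤ 2 := by
        intro u
        by_cases hu : u = v
        · subst hu; omega
        · rw [hco u hu]; exact h2 u
      have hlt : w2.length < w.length := by
        rw [length_eq_sum_count, length_eq_sum_count]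
        refine Finset.sum_lt_sum (fun u _ => ?_) ⟨v, Finset.mem_univ v, by omega⟩
        by_cases hu : u = v
        · subst hu; omega
        · rw [hco u hu]
      exact ih w2 (by omega) hw2 h2'
    · push_neg at hex
      refine ⟨w, hw, fun u => ?_⟩
      by_cases hb : Bad G u
      · simp only [hb, if_true]; exact h2 u
      · have := hex u hb; simp only [hb, if_false]; omega

lemma sum_one_ite {n : ℕ} (G : SimpleGraph (Fin n)) [DecidablePred (Bad G)] :
    ∑ v : Fin n, (1 + if Bad G v then 1 else 0) =
      n + (Finset.univ.filter (Bad G)).card := by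
  rw [Finset.sum_add_distrib, Finset.sum_const, ← Finset.card_filter]
  simp [mul_comm]

end Stmt19Aux

theorem stmt19 (n : ℕ) (G : SimpleGraph (Fin n)) [DecidablePred (Bad G)]
    (w : List (Fin n)) (hw : Represents G w) (h2 : ∀ v : Fin n, w.count v ≤ 2) :
    IsLeast {l : ℕ | ∃ w' : List (Fin n), Represents G w' ∧ w'.length = l}
      (n + (Finset.univ.filter (Bad G)).card) := by
  constructor
  · obtain ⟨w', hw', hcnt⟩ := Stmt19Aux.reduce w.length w le_rfl hw h2
    refine ⟨w', hw', ?_⟩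
    have hle : w'.length ≤ n + (Finset.univ.filter (Bad G)).card := by
      rw [Stmt19Aux.length_eq_sum_count, ← Stmt19Aux.sum_one_ite G]
      refine Finset.sum_le_sum (fun u _ => ?_)
      have := hcnt u
      by_cases hb : Bad G u <;> simp only [hb, if_true, if_false] at this ⊢ <;> omega
    have hge := Stmt19Aux.lower_bound hw'
    omega
  · rintro l ⟨w', hw', rfl⟩
    exact Stmt19Aux.lower_bound hw'
end
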